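/- An indecomposable two-sided ideal I of the incidence algebra is maximal indecomposable if and only if I·I ≠ 0, if and only if I·I = I (I is idempotent). -/

import Mathlib

open Classical in
/-- The generator `[xy]` of the incidence algebra over `ℂ`:
the "matrix unit" supported at `(x, y)` (zero unless `x ≤ y`). -/
noncomputable def gen {C : Type*} [PartialOrder C] (x y : C) :
    IncidenceAlgebra ℂ C :=
  ⟨fun a b => if a = x ∧ b = y ∧ x ≤ y then 1 else 0, by
    intro a b hab
    rw [if_neg]
    rintro ⟨rfl, rfl, hxy⟩
    exact hab hxy⟩

/-- The product of two two-sided ideals: the two-sided ideal generated by pairwise products. -/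
noncomputable def idealProd {R : Type*} [NonUnitalNonAssocRing R] (I J : TwoSidedIdeal R) :
    TwoSidedIdeal R :=
  TwoSidedIdeal.span {z | ∃ a ∈ I, ∃ b ∈ J, z = a * b}

/-- A two-sided ideal is indecomposable if it is nonzero and is not the sum (join)
of two ideals each distinct from itself. -/
def IsIndecomposable {R : Type*} [NonUnitalNonAssocRing R] (I : TwoSidedIdeal R) : Prop :=
  I ≠ ⊥ ∧ ∀ I₁ I₂ : TwoSidedIdeal R, I = I₁ ⊔ I₂ → I₁ = I ∨ I₂ = I

/-- A maximal indecomposable ideal: indecomposable and properly contained in no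
other indecomposable ideal. -/
def IsMaximalIndecomposable {R : Type*} [NonUnitalNonAssocRing R]
    (I : TwoSidedIdeal R) : Prop :=
  IsIndecomposable I ∧ ∀ J : TwoSidedIdeal R, IsIndecomposable J → I ≤ J → I = J

section Aux

open Finset IncidenceAlgebra
open scoped Classical

variable {C : Type*} [Fintype C] [PartialOrder C] [DecidableEq C] [LocallyFiniteOrder C]

lemma gen_apply (x y a b : C) :
    gen (C := C) x y a b = if a = x ∧ b = y ∧ x ≤ y then (1 : ℂ) else 0 := by
  simp only [gen, IncidenceAlgebra.coe_mk]
  split_ifs with h <;> rfl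

lemma gen_ne_zero {x y : C} (h : x ≤ y) : gen (C := C) x y ≠ 0 := by
  intro h0
  have : gen (C := C) x y x y = 0 := by rw [h0]; rfl
  rw [gen_apply, if_pos ⟨rfl, rfl, h⟩] at this
  exact one_ne_zero this

/-- Multiplying by `c • gen x x` on the left. -/
lemma smul_gen_mul_apply (c : ℂ) (x : C) (g : IncidenceAlgebra ℂ C) (a b : C) :
    ((c • gen x x) * g) a b = if a = x then c * g x b else 0 := by
  rw [mul_apply]
  by_cases ha : a = x
  · subst ha
    rw [if_pos rfl, Finset.sum_eq_single a]
    · rw [constSMul_apply, gen_apply, if_pos ⟨rfl, rfl, le_rfl⟩, smul_eq_mul, mul_one]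
    · intro z hz hzx
      rw [constSMul_apply, gen_apply, if_neg (by tauto), smul_zero, zero_mul]
    · intro hab
      have : ¬ a ≤ b := by
        intro h; exact hab (mem_Icc.2 ⟨le_rfl, h⟩)
      rw [apply_eq_zero_of_not_le this g, mul_zero]
  · rw [if_neg ha]
    refine Finset.sum_eq_zero fun z hz => ?_
    rw [constSMul_apply, gen_apply, if_neg (by tauto), smul_zero, zero_mul]

/-- Multiplying by `gen y y` on the right. -/
lemma mul_gen_apply (y : C) (g : IncidenceAlgebra ℂ C) (a b : C) :
    (g * gen y y) a b = if b = y then g a y else 0 := by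
  rw [mul_apply]
  by_cases hb : b = y
  · subst hb
    rw [if_pos rfl, Finset.sum_eq_single b]
    · rw [gen_apply, if_pos ⟨rfl, rfl, le_rfl⟩, mul_one]
    · intro z hz hzy
      rw [gen_apply, if_neg (by tauto), mul_zero]
    · intro hab
      have : ¬ a ≤ b := by
        intro h; exact hab (mem_Icc.2 ⟨h, le_rfl⟩)
      rw [apply_eq_zero_of_not_le this g, zero_mul]
  · rw [if_neg hb]
    refine Finset.sum_eq_zero fun z hz => ?_
    rw [gen_apply, if_neg (by tauto), mul_zero]

lemma gen_mul_gen {x y z : C} (hxy : x ≤ y) (hyz : y ≤ z) :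
    gen (C := C) x y * gen y z = gen x z := by
  ext a b hab
  rw [mul_apply, gen_apply]
  by_cases hax : a = x
  · by_cases hbz : b = z
    · subst hax; subst hbz
      rw [if_pos ⟨rfl, rfl, hxy.trans hyz⟩, Finset.sum_eq_single y]
      · rw [gen_apply, if_pos ⟨rfl, rfl, hxy⟩, gen_apply, if_pos ⟨rfl, rfl, hyz⟩, mul_one]
      · intro w hw hwy
        rw [gen_apply, if_neg (by tauto), zero_mul]
      · intro h
        exact absurd (mem_Icc.2 ⟨hxy, hyz⟩) h
    · rw [if_neg (by tauto)]
      refine Finset.sum_eq_zero fun w hw => ?_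
      rw [gen_apply (a := w) (x := y), if_neg (by tauto), mul_zero]
  · rw [if_neg (by tauto)]
    refine Finset.sum_eq_zero fun w hw => ?_
    rw [gen_apply, if_neg (by tauto), zero_mul]

lemma smul_mem_ideal {I : TwoSidedIdeal (IncidenceAlgebra ℂ C)} {g : IncidenceAlgebra ℂ C}
    (hg : g ∈ I) (c : ℂ) : c • g ∈ I := by
  have : c • g = (c • (1 : IncidenceAlgebra ℂ C)) * g := by
    rw [smul_mul_assoc, one_mul]
  rw [this]
  exact I.mul_mem_left _ _ hg

/-- Extraction: if `f ∈ I` and `f x y ≠ 0` then the matrix unit `gen x y ∈ I`. -/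
lemma gen_mem_of_apply_ne_zero {I : TwoSidedIdeal (IncidenceAlgebra ℂ C)}
    {f : IncidenceAlgebra ℂ C} (hf : f ∈ I) {x y : C} (h : f x y ≠ 0) :
    gen (C := C) x y ∈ I := by
  have hxy : x ≤ y := le_of_ne_zero h
  have key : (((f x y)⁻¹ • gen x x) * f) * gen y y = gen x y := by
    ext a b hab
    rw [mul_gen_apply, smul_gen_mul_apply, gen_apply]
    split_ifs <;> first
      | rfl
      | tauto
      | exact inv_mul_cancel₀ h
  rw [← key]
  exact I.mul_mem_right _ _ (I.mul_mem_left _ _ hf)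

/-- Evaluation at a pair, as an additive monoid hom. -/
def evalHom (a b : C) : IncidenceAlgebra ℂ C →+ ℂ where
  toFun f := f a b
  map_zero' := rfl
  map_add' _ _ := rfl

lemma smul_gen_eq (c : ℂ) (x y : C) :
    c • gen (C := C) x y = (c • gen x x) * gen x y := by
  ext a b hab
  rw [smul_gen_mul_apply, constSMul_apply, gen_apply, gen_apply]
  split_ifs <;> first
    | tauto
    | simp

lemma eq_sum_gen (f : IncidenceAlgebra ℂ C) :
    f = ∑ p : C × C, f p.1 p.2 • gen p.1 p.2 := by
  ext a b hab
  show evalHom a b f = evalHom a b _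
  rw [map_sum]
  have : ∀ p : C × C, evalHom a b (f p.1 p.2 • gen p.1 p.2)
      = f p.1 p.2 * gen p.1 p.2 a b := fun p => rfl
  rw [Finset.sum_congr rfl fun p _ => this p, Finset.sum_eq_single (a, b)]
  · rw [gen_apply, if_pos ⟨rfl, rfl, hab⟩, mul_one]; rfl
  · intro p _ hp
    rw [gen_apply, if_neg, mul_zero]
    rintro ⟨rfl, rfl, -⟩
    exact hp rfl
  · intro h; exact absurd (Finset.mem_univ _) h

lemma mem_iff_gen {I : TwoSidedIdeal (IncidenceAlgebra ℂ C)} {f : IncidenceAlgebra ℂ C} :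
    f ∈ I ↔ ∀ x y : C, f x y ≠ 0 → gen (C := C) x y ∈ I := by
  constructor
  · intro hf x y h
    exact gen_mem_of_apply_ne_zero hf h
  · intro h
    rw [eq_sum_gen f]
    refine sum_mem fun p _ => ?_
    by_cases hp : f p.1 p.2 = 0
    · rw [hp, zero_smul]; exact I.zero_mem
    · exact smul_mem_ideal (h _ _ hp) _

/-- The principal two-sided ideal "generated by the matrix unit at `(u, v)`". -/
noncomputable def prin (u v : C) : TwoSidedIdeal (IncidenceAlgebra ℂ C) :=
  TwoSidedIdeal.mk' {f | ∀ a b : C, f a b ≠ 0 → a ≤ u ∧ v ≤ b}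
    (fun a b h => absurd rfl h)
    (by
      intro f g hf hg a b h
      by_cases hf' : f a b = 0
      · refine hg a b ?_
        rw [IncidenceAlgebra.add_apply, hf', zero_add] at h
        exact h
      · exact hf a b hf')
    (by
      intro f hf a b h
      refine hf a b ?_
      rw [IncidenceAlgebra.neg_apply, neg_ne_zero] at h
      exact h)
    (by
      intro r f hf a b h
      rw [mul_apply] at h
      obtain ⟨z, hz, hne⟩ := Finset.exists_ne_zero_of_sum_ne_zero h
      have hfz : f z b ≠ 0 := fun h0 => hne (by rw [h0, mul_zero])
      obtain ⟨h1, h2⟩ := hf z b hfz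
      exact ⟨(mem_Icc.1 hz).1.trans h1, h2⟩)
    (by
      intro r f hf a b h
      rw [mul_apply] at h
      obtain ⟨z, hz, hne⟩ := Finset.exists_ne_zero_of_sum_ne_zero h
      have hfz : r a z ≠ 0 := fun h0 => hne (by rw [h0, zero_mul])
      obtain ⟨h1, h2⟩ := hf a z hfz
      exact ⟨h1, h2.trans (mem_Icc.1 hz).2⟩)

lemma mem_prin {u v : C} {f : IncidenceAlgebra ℂ C} :
    f ∈ prin u v ↔ ∀ a b : C, f a b ≠ 0 → a ≤ u ∧ v ≤ b :=
  TwoSidedIdeal.mem_mk' _ _ _ _ _ _ _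

lemma gen_mem_prin (u v : C) : gen (C := C) u v ∈ prin u v := by
  rw [mem_prin]
  intro a b h
  rw [gen_apply] at h
  by_cases hc : a = u ∧ b = v ∧ u ≤ v
  · exact ⟨hc.1.le, hc.2.1.ge⟩
  · rw [if_neg hc] at h; exact absurd rfl h

lemma prin_ne_bot (u v : C) (huv : u ≤ v) : prin (C := C) u v ≠ ⊥ := by
  intro h
  have := gen_mem_prin u v
  rw [h, TwoSidedIdeal.mem_bot] at this
  exact gen_ne_zero huv this

lemma prin_le {I : TwoSidedIdeal (IncidenceAlgebra ℂ C)} {u v : C} (huv : u ≤ v)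
    (h : gen (C := C) u v ∈ I) : prin u v ≤ I := by
  intro f hf
  rw [mem_prin] at hf
  rw [mem_iff_gen]
  intro a b hab
  obtain ⟨h1, h2⟩ := hf a b hab
  have hab' : a ≤ b := le_of_ne_zero hab
  have e1 : gen (C := C) a u * gen u v = gen a v := gen_mul_gen h1 huv
  have e2 : gen (C := C) a v * gen v b = gen a b := gen_mul_gen (h1.trans huv) h2
  rw [← e2, ← e1]
  exact I.mul_mem_right _ _ (I.mul_mem_left _ _ h)

lemma smul_gen_mem_prin (c : ℂ) (u v : C) : c • gen (C := C) u v ∈ prin u v := by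
  rw [mem_prin]
  intro a b h
  rw [constSMul_apply, gen_apply] at h
  by_cases hc : a = u ∧ b = v ∧ u ≤ v
  · exact ⟨hc.1.le, hc.2.1.ge⟩
  · rw [if_neg hc, smul_zero] at h; exact absurd rfl h

lemma ideal_eq_sup (I : TwoSidedIdeal (IncidenceAlgebra ℂ C)) :
    I = (Finset.univ.filter
        (fun p : C × C => p.1 ≤ p.2 ∧ gen (C := C) p.1 p.2 ∈ I)).sup
        (fun p => prin p.1 p.2) := by
  apply le_antisymm
  · intro f hf
    rw [eq_sum_gen f]
    refine sum_mem fun p _ => ?_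
    by_cases hp : f p.1 p.2 = 0
    · rw [hp, zero_smul]; exact TwoSidedIdeal.zero_mem _
    · have hmem : p ∈ Finset.univ.filter
          (fun p : C × C => p.1 ≤ p.2 ∧ gen (C := C) p.1 p.2 ∈ I) := by
        rw [Finset.mem_filter]
        exact ⟨Finset.mem_univ _, le_of_ne_zero hp, gen_mem_of_apply_ne_zero hf hp⟩
      exact Finset.le_sup (f := fun p : C × C => prin (C := C) p.1 p.2) hmem
        (smul_gen_mem_prin _ _ _)
  · refine Finset.sup_le fun p hp => ?_
    rw [Finset.mem_filter] at hp
    exact prin_le hp.2.1 hp.2.2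

lemma sup_decompose {I : TwoSidedIdeal (IncidenceAlgebra ℂ C)} (hI : IsIndecomposable I)
    (s : Finset (C × C)) (F : C × C → TwoSidedIdeal (IncidenceAlgebra ℂ C))
    (h : I = s.sup F) : ∃ p ∈ s, F p = I := by
  induction s using Finset.induction_on with
  | empty =>
    rw [Finset.sup_empty] at h
    exact absurd h hI.1
  | insert a s hx ih =>
    rw [Finset.sup_insert] at h
    rcases hI.2 _ _ h with h1 | h1
    · exact ⟨a, Finset.mem_insert_self _ _, h1⟩
    · obtain ⟨p, hp, hp'⟩ := ih h1.symm
      exact ⟨p, Finset.mem_insert_of_mem hp, hp'⟩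

/-- Every indecomposable two-sided ideal is principal. -/
lemma exists_prin {I : TwoSidedIdeal (IncidenceAlgebra ℂ C)} (hI : IsIndecomposable I) :
    ∃ u v : C, u ≤ v ∧ gen (C := C) u v ∈ I ∧ I = prin u v := by
  obtain ⟨p, hp, hp'⟩ := sup_decompose hI _ _ (ideal_eq_sup I)
  rw [Finset.mem_filter] at hp
  exact ⟨p.1, p.2, hp.2.1, hp.2.2, hp'.symm⟩

lemma prin_indec (u v : C) (huv : u ≤ v) : IsIndecomposable (prin (C := C) u v) := by
  refine ⟨prin_ne_bot u v huv, fun I₁ I₂ h => ?_⟩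
  have hg : gen (C := C) u v ∈ I₁ ⊔ I₂ := h ▸ gen_mem_prin u v
  rw [TwoSidedIdeal.mem_sup] at hg
  obtain ⟨y, hy, z, hz, hyz⟩ := hg
  have : y u v + z u v = gen (C := C) u v u v := by
    rw [← hyz]; rfl
  rw [gen_apply, if_pos ⟨rfl, rfl, huv⟩] at this
  have hor : y u v ≠ 0 ∨ z u v ≠ 0 := by
    by_contra hc
    push_neg at hc
    rw [hc.1, hc.2, add_zero] at this
    exact zero_ne_one this
  rcases hor with hne | hne
  · left
    exact le_antisymm (h ▸ le_sup_left)
      (prin_le huv (gen_mem_of_apply_ne_zero hy hne))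
  · right
    exact le_antisymm (h ▸ le_sup_right)
      (prin_le huv (gen_mem_of_apply_ne_zero hz hne))

lemma prin_max (u : C) : IsMaximalIndecomposable (prin (C := C) u u) := by
  refine ⟨prin_indec u u le_rfl, fun J hJ hle => ?_⟩
  obtain ⟨a, b, hab, hgen, rfl⟩ := exists_prin hJ
  have := hle (gen_mem_prin u u)
  rw [mem_prin] at this
  obtain ⟨h1, h2⟩ := this u u (by
    rw [gen_apply, if_pos ⟨rfl, rfl, le_rfl⟩]; exact one_ne_zero)
  have ha : a = u := le_antisymm (hab.trans h2) h1
  have hb : b = u := le_antisymm h2 (h1.trans hab)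
  rw [ha, hb]

lemma prin_not_max {u v : C} (huv : u ≤ v) (hne : u ≠ v) :
    ¬ IsMaximalIndecomposable (prin (C := C) u v) := by
  rintro ⟨-, hmax⟩
  have hle : prin (C := C) u v ≤ prin u u := by
    intro f hf
    rw [mem_prin] at hf
    rw [mem_prin]
    intro a b h
    obtain ⟨h1, h2⟩ := hf a b h
    exact ⟨h1, huv.trans h2⟩
  have := hmax _ (prin_indec u u le_rfl) hle
  have hg : gen (C := C) u u ∈ prin u v := this ▸ gen_mem_prin u u
  rw [mem_prin] at hg
  obtain ⟨-, h2⟩ := hg u u (by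
    rw [gen_apply, if_pos ⟨rfl, rfl, le_rfl⟩]; exact one_ne_zero)
  exact hne (le_antisymm huv h2)

lemma idealProd_le_left (I : TwoSidedIdeal (IncidenceAlgebra ℂ C)) :
    idealProd I I ≤ I := by
  intro f hf
  rw [idealProd, TwoSidedIdeal.mem_span_iff] at hf
  refine hf I ?_
  rintro z ⟨a, ha, b, hb, rfl⟩
  exact I.mul_mem_right _ _ ha

lemma idealProd_self_eq (u : C) :
    idealProd (prin (C := C) u u) (prin u u) = prin u u := by
  refine le_antisymm (idealProd_le_left _) (prin_le le_rfl ?_)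
  have : gen (C := C) u u = gen u u * gen u u := (gen_mul_gen le_rfl le_rfl).symm
  refine TwoSidedIdeal.subset_span ?_
  exact ⟨gen u u, gen_mem_prin u u, gen u u, gen_mem_prin u u, this⟩

lemma idealProd_self_bot {u v : C} (huv : u ≤ v) (hne : u ≠ v) :
    idealProd (prin (C := C) u v) (prin u v) = ⊥ := by
  refine le_bot_iff.mp ?_
  intro f hf
  rw [idealProd, TwoSidedIdeal.mem_span_iff] at hf
  refine hf ⊥ ?_
  rintro z ⟨a, ha, b, hb, rfl⟩
  rw [SetLike.mem_coe, TwoSidedIdeal.mem_bot]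
  rw [mem_prin] at ha hb
  ext p q hpq
  rw [mul_apply, IncidenceAlgebra.zero_apply]
  refine Finset.sum_eq_zero fun w hw => ?_
  by_cases haw : a p w = 0
  · rw [haw, zero_mul]
  by_cases hbw : b w q = 0
  · rw [hbw, mul_zero]
  obtain ⟨-, h2⟩ := ha p w haw
  obtain ⟨h3, -⟩ := hb w q hbw
  exact absurd (le_antisymm huv (h2.trans h3)) hne

end Aux

/-- An indecomposable ideal is maximal indecomposable iff `I·I ≠ 0`, iff `I·I = I`. -/
theorem maximal_indecomposable_iff_idempotent {C : Type*} [Fintype C] [PartialOrder C] [DecidableEq C] [LocallyFiniteOrder C]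
    (I : TwoSidedIdeal (IncidenceAlgebra ℂ C)) (hI : IsIndecomposable I) :
    (IsMaximalIndecomposable I ↔ idealProd I I ≠ ⊥) ∧
    (IsMaximalIndecomposable I ↔ idealProd I I = I) := by
  obtain ⟨u, v, huv, hgen, rfl⟩ := exists_prin hI
  by_cases h : u = v
  · subst h
    refine ⟨iff_of_true (prin_max u) ?_, iff_of_true (prin_max u) (idealProd_self_eq u)⟩
    rw [idealProd_self_eq u]
    exact prin_ne_bot u u le_rfl
  · have hbot := idealProd_self_bot huv h
    refine ⟨iff_of_false (prin_not_max huv h) ?_, iff_of_false (prin_not_max huv h) ?_⟩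
    · rw [hbot]; simp
    · rw [hbot]
      exact fun hc => prin_ne_bot u v huv hc.symm
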